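/- arXiv:1108.4792 — 2 statements merged into one kernel-verified Lean document; each statement's English description precedes it below -/
import Mathlib

section
/- Let $l, m \ge 1$ and let $a_0, \dots, a_l$ and $b_0, \dots, b_m$ be positive real numbers, each sequence being log-concave, i.e. $a_j^2 \ge a_{j-1} a_{j+1}$ for $1 \le j \le l-1$ and $b_q^2 \ge b_{q-1} b_{q+1}$ for $1 \le q \le m-1$. Define, for $0 \le p \le l+m$, $d_p := \max\{ a_j b_{p-j} : \max(0, p-m) \le j \le \min(p, l) \}$. Then the multiset of consecutive ratios $\{ d_{p+1}/d_p : 0 \le p \le l+m-1 \}$ is equal to the multiset union of $\{ a_{j+1}/a_j : 0 \le j \le l-1 \}$ and $\{ b_{q+1}/b_q : 0 \le q \le m-1 \}$. -/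
/-!
Let `r` and `s` be the ratio sequences of `a` and `b`; log-concavity makes both non-increasing.
Merge them greedily into one non-increasing sequence and let `k p` be the number of `r`-entries
among its first `p` entries. Because those `p` entries dominate all later ones,
`j ↦ a j * b (p - j)` increases up to `j = k p` and decreases after it, so
`d p = a (k p) * b (p - k p)`. Hence each ratio `d (p + 1) / d p` is the `p`-th entry of the merge.
-/

open Finset

/-- Number of entries of `r` among the first `p` entries of the greedy merge of
`r 0, …, r (l - 1)` and `s 0, …, s (m - 1)`, ties going to `r`. -/
def mergeCount {α : Type*} [LinearOrder α] (l m : ℕ) (r s : ℕ → α) : ℕ → ℕ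
  | 0 => 0
  | p + 1 =>
    if mergeCount l m r s p < l ∧
        (m ≤ p - mergeCount l m r s p ∨
          s (p - mergeCount l m r s p) ≤ r (mergeCount l m r s p)) then
      mergeCount l m r s p + 1
    else mergeCount l m r s p

/-- `r 0, …, r (k - 1)` together with `s 0, …, s (p - k - 1)` are `p` largest entries among
`r 0, …, r (l - 1)` and `s 0, …, s (m - 1)`. -/
structure IsMergePrefix {α : Type*} [LinearOrder α] (l m : ℕ) (r s : ℕ → α) (p k : ℕ) :
    Prop where
  le_left : k ≤ l
  le_card : k ≤ p
  card_le : p ≤ k + m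
  right_le_left : ∀ i < k, ∀ q, p - k ≤ q → q < m → s q ≤ r i
  left_le_right : ∀ q < p - k, ∀ i, k ≤ i → i < l → r i ≤ s q

section Merge

variable {α : Type*} [LinearOrder α] {l m : ℕ} {r s : ℕ → α} {p k : ℕ}

theorem mergeCount_succ_eq_or (l m : ℕ) (r s : ℕ → α) (p : ℕ) :
    mergeCount l m r s (p + 1) = mergeCount l m r s p + 1 ∨
      mergeCount l m r s (p + 1) = mergeCount l m r s p := by
  rw [mergeCount]
  split_ifs <;> simp

theorem IsMergePrefix.succ_left (h : IsMergePrefix l m r s p k) (hs : AntitoneOn s (Set.Iio m))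
    (hk : k < l) (hcmp : m ≤ p - k ∨ s (p - k) ≤ r k) :
    IsMergePrefix l m r s (p + 1) (k + 1) where
  le_left := hk
  le_card := by have := h.le_card; omega
  card_le := by have := h.card_le; omega
  right_le_left i hi q hq hqm := by
    rcases Nat.lt_succ_iff_lt_or_eq.mp hi with hi | rfl
    · exact h.right_le_left i hi q (by omega) hqm
    · have hcmp' : s (p - i) ≤ r i := hcmp.resolve_left (by omega)
      exact (hs (Set.mem_Iio.mpr (by omega)) hqm (by omega)).trans hcmp'
  left_le_right q hq i hi hil := h.left_le_right q (by omega) i (by omega) hil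

theorem IsMergePrefix.succ_right (h : IsMergePrefix l m r s p k) (hr : AntitoneOn r (Set.Iio l))
    (hpk : p < k + m) (hcmp : k < l → r k ≤ s (p - k)) :
    IsMergePrefix l m r s (p + 1) k where
  le_left := h.le_left
  le_card := by have := h.le_card; omega
  card_le := hpk
  right_le_left i hi q hq hqm := h.right_le_left i hi q (by omega) hqm
  left_le_right q hq i hi hil := by
    have hkp := h.le_card
    rcases Nat.lt_succ_iff_lt_or_eq.mp (show q < p - k + 1 by omega) with hq | rfl
    · exact h.left_le_right q hq i hi hil
    · exact (hr (hi.trans_lt hil) hil hi).trans (hcmp (by omega))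

theorem IsMergePrefix.eq_left_of_card_eq (h : IsMergePrefix l m r s (l + m) k) : k = l := by
  have := h.le_left; have := h.card_le; omega

theorem isMergePrefix_mergeCount (hr : AntitoneOn r (Set.Iio l)) (hs : AntitoneOn s (Set.Iio m)) :
    ∀ p ≤ l + m, IsMergePrefix l m r s p (mergeCount l m r s p)
  | 0, _ => ⟨Nat.zero_le _, le_rfl, Nat.zero_le _, by simp [mergeCount], by simp [mergeCount]⟩
  | p + 1, hp => by
    have h := isMergePrefix_mergeCount hr hs p (by omega)
    rw [mergeCount]
    split_ifs with hcmp
    · exact h.succ_left hs hcmp.1 hcmp.2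
    · push Not at hcmp
      refine h.succ_right hr ?_ fun hk => (hcmp hk).2.le
      rcases h.le_left.lt_or_eq with hk | hk
      · have := (hcmp hk).1; omega
      · omega

end Merge

def succRatio {K : Type*} [DivisionRing K] (a : ℕ → K) (j : ℕ) : K := a (j + 1) / a j

section Ratio

variable {K : Type*} [Field K] [LinearOrder K] [IsStrictOrderedRing K] {a b : ℕ → K} {l m : ℕ}

theorem antitoneOn_succRatio (hpos : ∀ j ≤ l, 0 < a j)
    (hlc : ∀ j, 1 ≤ j → j + 1 ≤ l → a (j - 1) * a (j + 1) ≤ a j ^ 2) :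
    AntitoneOn (succRatio a) (Set.Iio l) := by
  refine antitoneOn_of_succ_le Set.ordConnected_Iio fun j _ _ hj => ?_
  simp only [Order.succ_eq_add_one, Set.mem_Iio] at hj ⊢
  have h := hlc (j + 1) (by omega) (by omega)
  simp only [Nat.add_sub_cancel] at h
  rw [succRatio, succRatio, div_le_div_iff₀ (hpos _ (by omega)) (hpos _ (by omega))]
  nlinarith

theorem mul_le_mul_of_succRatio_le {i q : ℕ} (ha : 0 < a i) (hb : 0 < b q)
    (h : succRatio b q ≤ succRatio a i) : a i * b (q + 1) ≤ a (i + 1) * b q := by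
  rw [succRatio, succRatio, div_le_div_iff₀ hb ha] at h
  linarith

theorem IsMergePrefix.mul_le_of_mem_Icc {p k : ℕ} (ha : ∀ j ≤ l, 0 < a j) (hb : ∀ q ≤ m, 0 < b q)
    (h : IsMergePrefix l m (succRatio a) (succRatio b) p k) {j : ℕ}
    (hj : j ∈ Icc (p - m) (min p l)) : a j * b (p - j) ≤ a k * b (p - k) := by
  have hkl := h.le_left
  have hkp := h.le_card
  have hpk := h.card_le
  simp only [mem_Icc, le_min_iff] at hj
  set f : ℕ → K := fun j => a j * b (p - j)
  have hup : MonotoneOn f (Set.Icc (p - m) k) := by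
    refine monotoneOn_of_le_succ Set.ordConnected_Icc fun i _ hi hi' => ?_
    simp only [Order.succ_eq_add_one, Set.mem_Icc] at hi hi' ⊢
    have hcmp := h.right_le_left i (by omega) (p - (i + 1)) (by omega) (by omega)
    have := mul_le_mul_of_succRatio_le (ha i (by omega)) (hb _ (by omega)) hcmp
    rwa [show p - (i + 1) + 1 = p - i by omega] at this
  have hdown : AntitoneOn f (Set.Icc k (min p l)) := by
    refine antitoneOn_of_succ_le Set.ordConnected_Icc fun i _ hi hi' => ?_
    simp only [Order.succ_eq_add_one, Set.mem_Icc, le_min_iff] at hi hi' ⊢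
    have hcmp := h.left_le_right (p - (i + 1)) (by omega) i hi.1 (by omega)
    have := mul_le_mul_of_succRatio_le (hb _ (by omega)) (ha i (by omega)) hcmp
    rw [show p - (i + 1) + 1 = p - i by omega] at this
    linarith
  rcases le_total j k with hjk | hkj
  · exact hup ⟨hj.1, hjk⟩ ⟨by omega, le_rfl⟩ hjk
  · exact hdown ⟨le_rfl, le_min (by omega) h.le_left⟩ ⟨hkj, le_min hj.2.1 hj.2.2⟩ hkj

theorem IsMergePrefix.sup'_eq {p k : ℕ} (ha : ∀ j ≤ l, 0 < a j) (hb : ∀ q ≤ m, 0 < b q)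
    (h : IsMergePrefix l m (succRatio a) (succRatio b) p k) (hne : (Icc (p - m) (min p l)).Nonempty) :
    (Icc (p - m) (min p l)).sup' hne (fun j => a j * b (p - j)) = a k * b (p - k) := by
  refine le_antisymm (sup'_le _ _ fun j hj => h.mul_le_of_mem_Icc ha hb hj) ?_
  have hpk := h.card_le
  exact le_sup' (fun j => a j * b (p - j)) (mem_Icc.mpr ⟨by omega, le_min h.le_card h.le_left⟩)

end Ratio

theorem map_range_eq_of_step {α : Type*} (f r s : ℕ → α) (c : ℕ → ℕ) (n : ℕ) (hc0 : c 0 = 0)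
    (hstep : ∀ p < n, (c (p + 1) = c p + 1 ∧ f p = r (c p)) ∨
      (c (p + 1) = c p ∧ f p = s (p - c p))) :
    (Multiset.range n).map f = (Multiset.range (c n)).map r + (Multiset.range (n - c n)).map s := by
  suffices c n ≤ n ∧ _ from this.2
  induction n with
  | zero => simp [hc0]
  | succ n ih =>
    obtain ⟨hcn, ih⟩ := ih fun p hp => hstep p (by omega)
    rw [Multiset.range_succ, Multiset.map_cons, ih]
    rcases hstep n (by omega) with ⟨hc, hf⟩ | ⟨hc, hf⟩
    · rw [hc, hf, show n + 1 - (c n + 1) = n - c n by omega, Multiset.range_succ,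
        Multiset.map_cons, Multiset.cons_add]
      exact ⟨by omega, rfl⟩
    · rw [hc, hf, show n + 1 - c n = n - c n + 1 by omega, Multiset.range_succ,
        Multiset.map_cons, Multiset.add_cons]
      exact ⟨by omega, rfl⟩

/-- The multiset of consecutive ratios of the max-plus (tropical) convolution of two
positive log-concave sequences is the multiset union of the multisets of consecutive
ratios of the two sequences. -/
theorem maxConv_ratio_multiset
    (l m : ℕ) (a b : ℕ → ℝ) (d : ℕ → ℝ)
    (hapos : ∀ j : ℕ, j ≤ l → 0 < a j)
    (hbpos : ∀ q : ℕ, q ≤ m → 0 < b q)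
    (halc : ∀ j : ℕ, 1 ≤ j → j + 1 ≤ l → a (j - 1) * a (j + 1) ≤ a j ^ 2)
    (hblc : ∀ q : ℕ, 1 ≤ q → q + 1 ≤ m → b (q - 1) * b (q + 1) ≤ b q ^ 2)
    (hd : ∀ p : ℕ, (hp : p ≤ l + m) →
      d p = (Finset.Icc (p - m) (min p l)).sup'
        (Finset.nonempty_Icc.mpr (by omega)) (fun j => a j * b (p - j))) :
    (Multiset.range (l + m)).map (fun p => d (p + 1) / d p)
      = (Multiset.range l).map (fun j => a (j + 1) / a j)
        + (Multiset.range m).map (fun q => b (q + 1) / b q) := by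
  set c := mergeCount l m (succRatio a) (succRatio b)
  have hsplit : ∀ p ≤ l + m, IsMergePrefix l m (succRatio a) (succRatio b) p (c p) :=
    isMergePrefix_mergeCount (antitoneOn_succRatio hapos halc) (antitoneOn_succRatio hbpos hblc)
  have hdc : ∀ p ≤ l + m, d p = a (c p) * b (p - c p) := fun p hp =>
    (hd p hp).trans ((hsplit p hp).sup'_eq hapos hbpos _)
  have hend : c (l + m) = l := (hsplit (l + m) le_rfl).eq_left_of_card_eq
  have key := map_range_eq_of_step (fun p => d (p + 1) / d p) (succRatio a) (succRatio b) c
    (l + m) rfl fun p hp => by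
      have hk := hsplit p hp.le
      have ha := (hapos (c p) hk.le_left).ne'
      have hkp := hk.le_card
      have hpk := hk.card_le
      have hb := (hbpos (p - c p) (by omega)).ne'
      simp only [hdc p hp.le, hdc (p + 1) hp]
      have hc : c (p + 1) = c p + 1 ∨ c (p + 1) = c p := mergeCount_succ_eq_or ..
      rcases hc with hc | hc <;> rw [hc]
      · refine .inl ⟨rfl, ?_⟩
        rw [show p + 1 - (c p + 1) = p - c p by omega, mul_div_mul_right _ _ hb, succRatio]
      · refine .inr ⟨rfl, ?_⟩
        rw [show p + 1 - c p = p - c p + 1 by omega, mul_div_mul_left _ _ ha, succRatio]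
  rwa [hend, Nat.add_sub_cancel_left] at key
end

section
/- Let $L, M$ be natural numbers and $A \ge 1$ a real number. For all integers $q, p$ with $0 \le q \le p$ and all integers $n \ge 1$, let $a_{q,p}(n) \ge 0$ be given, and for all integers $j \ge 0$ and $n \ge 1$ let $c_j(n) \ge 0$ be given. Assume: (i) $A\, c_0(n) \ge 1$ for every $n \ge 1$; (ii) for all integers $p_0, p$ with $0 \le p_0 \le M$ and $p_0 \le p \le p_0 + L$, and all integers $m, n \ge 1$, one has $a_{p_0,p}(m+n) \le A \sum_{q=p_0}^{\min(p,M)} a_{q,p}(m)\, a_{p_0,q}(n)\, c_{p-q}(n)$. Then for all integers $p_0, p$ with $0 \le p_0 \le M$ and $p_0 \le p \le p_0 + L$, and all integers $n, r \ge 1$: $a_{p_0,p}(n r) \le A^r \sum \prod_{s=1}^{r} a_{p_{s-1},p_s}(n)\, c_{p-p_s}(n)$, where the sum is taken over all integer tuples $(p_1, \dots, p_r)$ satisfying $p_0 \le p_1 \le p_2 \le \cdots \le p_r \le p$ and $p_{r-1} \le M$ (with $p_{r-1}$ read as $p_0$ when $r = 1$). -/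
/-!
Apply the one-step inequality with times `n r` and `n`, and bound `a_{q,p}(n r)` by induction
on `r`: each step prepends one link `p₀ → q` to the chains starting at `q`, contributing the
factor `A a_{p₀,q}(n) c_{p-q}(n)`. In the base case `r = 1` the factor `A c₀(n) ≥ 1` is absorbed
as the single chain `p₀ → p`.
-/

open Finset

section Chains

variable (a : ℕ → ℕ → ℝ) (c : ℕ → ℝ) (M p : ℕ)

def chainSet (p₀ r : ℕ) : Finset (Fin (r + 1) → Fin (p + 1)) :=
  univ.filter fun P => (P 0 : ℕ) = p₀ ∧ (∀ i : Fin r, (P i.castSucc : ℕ) ≤ (P i.succ : ℕ)) ∧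
    (P ⟨r - 1, Nat.lt_succ_of_le (Nat.sub_le r 1)⟩ : ℕ) ≤ M

def chainWeight {r : ℕ} (P : Fin (r + 1) → Fin (p + 1)) : ℝ :=
  ∏ s : Fin r, a (P s.castSucc) (P s.succ) * c (p - (P s.succ : ℕ))

def chainSum (p₀ r : ℕ) : ℝ :=
  ∑ P ∈ chainSet M p p₀ r, chainWeight a c p P

variable {a c M p}

lemma head_le_of_mem_chainSet {p₀ r : ℕ} {P : Fin (r + 1) → Fin (p + 1)}
    (hP : P ∈ chainSet M p p₀ r) : p₀ ≤ M := by
  obtain ⟨rfl, hmono, hM⟩ := (mem_filter.mp hP).2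
  exact (Fin.le_def.mp ((Fin.monotone_iff_le_succ (f := P)).mpr hmono (Fin.zero_le _))).trans hM

lemma mem_chainSet_succ_iff {p₀ r : ℕ} (hr : 1 ≤ r) {P : Fin (r + 2) → Fin (p + 1)} :
    P ∈ chainSet M p p₀ (r + 1) ↔
      (P 0 : ℕ) = p₀ ∧ P 0 ≤ P 1 ∧ Fin.tail P ∈ chainSet M p (P 1) r := by
  have hlast : (⟨r + 1 - 1, by omega⟩ : Fin (r + 2)) = (⟨r - 1, by omega⟩ : Fin (r + 1)).succ := by
    ext; simp; omega
  simp only [chainSet, mem_filter, mem_univ, true_and, Fin.forall_fin_succ, Fin.tail, hlast,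
    Fin.succ_castSucc, Fin.castSucc_zero, Fin.succ_zero_eq_one, Fin.le_def]
  tauto

lemma chainWeight_cons {r : ℕ} (x : Fin (p + 1)) (Q : Fin (r + 1) → Fin (p + 1)) :
    chainWeight a c p (Fin.cons x Q : Fin (r + 2) → Fin (p + 1)) =
      a x (Q 0) * c (p - (Q 0 : ℕ)) * chainWeight a c p Q := by
  simp only [chainWeight, Fin.prod_univ_succ, Fin.castSucc_zero, Fin.cons_zero, Fin.cons_succ,
    ← Fin.succ_castSucc]

lemma chainWeight_nonneg (ha : ∀ q p', q ≤ p' → 0 ≤ a q p') (hc : ∀ j, 0 ≤ c j)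
    {p₀ r : ℕ} {P : Fin (r + 1) → Fin (p + 1)} (hP : P ∈ chainSet M p p₀ r) :
    0 ≤ chainWeight a c p P :=
  prod_nonneg fun s _ => mul_nonneg (ha _ _ ((mem_filter.mp hP).2.2.1 s)) (hc _)

lemma chainSum_succ {p₀ r : ℕ} (hr : 1 ≤ r) (hp : p₀ ≤ p) :
    chainSum a c M p p₀ (r + 1) =
      ∑ q ∈ Icc p₀ (min p M), a p₀ q * c (p - q) * chainSum a c M p q r := by
  simp only [chainSum, mul_sum]
  rw [sum_sigma']
  symm
  refine sum_nbij' (fun x => Fin.cons ⟨p₀, by omega⟩ x.2) (fun P => ⟨P 1, Fin.tail P⟩)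
    ?_ ?_ ?_ ?_ ?_
  · rintro ⟨q, Q⟩ hQ
    simp only [mem_sigma, mem_Icc] at hQ
    obtain ⟨⟨hq, -⟩, hQ⟩ := hQ
    have hQ0 : (Q 0 : ℕ) = q := (mem_filter.mp hQ).2.1
    rw [mem_chainSet_succ_iff hr, Fin.cons_one, Fin.tail_cons, Fin.cons_zero, Fin.le_def, hQ0]
    exact ⟨rfl, hq, hQ⟩
  · intro P hP
    rw [mem_chainSet_succ_iff hr] at hP
    obtain ⟨hP0, hP01, hP⟩ := hP
    simp only [mem_sigma, mem_Icc, le_min_iff]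
    exact ⟨⟨hP0 ▸ hP01, Nat.lt_succ_iff.mp (P 1).isLt, head_le_of_mem_chainSet hP⟩, hP⟩
  · rintro ⟨q, Q⟩ hQ
    have hQ0 : (Q 0 : ℕ) = q := (mem_filter.mp (mem_sigma.mp hQ).2).2.1
    simp only [Fin.cons_one, Fin.tail_cons, hQ0]
  · intro P hP
    have hP0 : (⟨p₀, by omega⟩ : Fin (p + 1)) = P 0 := Fin.ext (mem_filter.mp hP).2.1.symm
    simp only [hP0, Fin.cons_self_tail]
  · rintro ⟨q, Q⟩ hQ
    have hQ0 : (Q 0 : ℕ) = q := (mem_filter.mp (mem_sigma.mp hQ).2).2.1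
    rw [chainWeight_cons, hQ0]

lemma mul_le_chainSum_one (ha : ∀ q p', q ≤ p' → 0 ≤ a q p') (hc : ∀ j, 0 ≤ c j) {p₀ : ℕ}
    (hp : p₀ ≤ p) (hM : p₀ ≤ M) : a p₀ p * c 0 ≤ chainSum a c M p p₀ 1 := by
  let P : Fin 2 → Fin (p + 1) := ![⟨p₀, by omega⟩, ⟨p, by omega⟩]
  have hP : P ∈ chainSet M p p₀ 1 := by
    simp [chainSet, P, Fin.forall_fin_one, hp, hM]
  have hweight : chainWeight a c p P = a p₀ p * c 0 := by
    simp [chainWeight, P]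
  rw [← hweight]
  exact single_le_sum (fun _ hQ => chainWeight_nonneg ha hc hQ) hP

end Chains

/-- Abstract form of the key inductive inequality (Lemma 3.3): a one-step
submultiplicative-type inequality propagates along multiplicative times `n * r`
to a bound by sums over chains `p₀ ≤ p₁ ≤ ⋯ ≤ p_r ≤ p` with `p_{r-1} ≤ M`. -/
theorem chain_inequality_iterate
    (L M : ℕ) (A : ℝ) (hA : 1 ≤ A)
    (a : ℕ → ℕ → ℕ → ℝ) (c : ℕ → ℕ → ℝ)
    (ha : ∀ q p n : ℕ, q ≤ p → 1 ≤ n → 0 ≤ a q p n)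
    (hc : ∀ j n : ℕ, 1 ≤ n → 0 ≤ c j n)
    (hc0 : ∀ n : ℕ, 1 ≤ n → 1 ≤ A * c 0 n)
    (hstep : ∀ p₀ p m n : ℕ, p₀ ≤ M → p₀ ≤ p → p ≤ p₀ + L → 1 ≤ m → 1 ≤ n →
      a p₀ p (m + n) ≤
        A * ∑ q ∈ Finset.Icc p₀ (min p M), a q p m * a p₀ q n * c (p - q) n) :
    ∀ p₀ p n r : ℕ, p₀ ≤ M → p₀ ≤ p → p ≤ p₀ + L → 1 ≤ n → 1 ≤ r →
      a p₀ p (n * r) ≤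
        A ^ r *
          ∑ P ∈ Finset.univ.filter (fun P : Fin (r + 1) → Fin (p + 1) =>
              (P 0 : ℕ) = p₀ ∧
              (∀ i : Fin r, (P i.castSucc : ℕ) ≤ (P i.succ : ℕ)) ∧
              (P ⟨r - 1, by omega⟩ : ℕ) ≤ M),
            ∏ s : Fin r, a (P s.castSucc) (P s.succ) n * c (p - (P s.succ : ℕ)) n := by
  intro p₀ p n r hM hp hL hn hr
  show a p₀ p (n * r) ≤ A ^ r * chainSum (a · · n) (c · n) M p p₀ r
  have hA0 : 0 ≤ A := zero_le_one.trans hA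
  induction r, hr using Nat.le_induction generalizing p₀ with
  | base =>
    calc a p₀ p (n * 1) ≤ A * c 0 n * a p₀ p n := by
          rw [mul_one]; exact le_mul_of_one_le_left (ha _ _ _ hp hn) (hc0 n hn)
      _ = A * (a p₀ p n * c 0 n) := by ring
      _ ≤ A ^ 1 * chainSum (a · · n) (c · n) M p p₀ 1 := by
          rw [pow_one]
          exact mul_le_mul_of_nonneg_left
            (mul_le_chainSum_one (fun q p' h => ha q p' n h hn) (fun j => hc j n hn) hp hM) hA0
  | succ r hr ih =>
    calc a p₀ p (n * (r + 1))
        ≤ A * ∑ q ∈ Icc p₀ (min p M), a q p (n * r) * a p₀ q n * c (p - q) n :=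
          hstep p₀ p (n * r) n hM hp hL (Nat.mul_pos hn hr) hn
      _ ≤ A * ∑ q ∈ Icc p₀ (min p M),
            A ^ r * chainSum (a · · n) (c · n) M p q r * (a p₀ q n * c (p - q) n) := by
          refine mul_le_mul_of_nonneg_left (sum_le_sum fun q hq => ?_) hA0
          obtain ⟨hq₀, hqp, hqM⟩ : p₀ ≤ q ∧ q ≤ p ∧ q ≤ M := by simpa using hq
          rw [mul_assoc]
          exact mul_le_mul_of_nonneg_right (ih q hqM hqp (by omega))
            (mul_nonneg (ha _ _ _ hq₀ hn) (hc _ _ hn))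
      _ = A ^ (r + 1) * chainSum (a · · n) (c · n) M p p₀ (r + 1) := by
          simp only [chainSum_succ hr hp, mul_sum]
          exact sum_congr rfl fun q _ => by ring
end
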